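/- For any α > 1 and any t ∈ [−1/2, 1], (1+t)^((α−1)/α) ≥ 1 + ((α−1)/α)·t − ((α−1)/α²)·t². -/

import Mathlib

/-!
Write `p = (α - 1)/α`, so that `1 - p = 1/α` and the claim reads
`1 + p t - p (1 - p) t² ≤ (1 + t)^p`. The difference of the two sides vanishes at `0` and has
derivative `p ((1 + t)^(p - 1) - 1 + 2 (1 - p) t)`, which has the sign of `t` on `[-1/2, ∞)` by
Bernoulli's inequality: for `t ≥ 0`, `(1 + t)^(p - 1) ≥ 1/(1 + (1 - p) t) ≥ 1 - (1 - p) t`; for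
`-1/2 ≤ t ≤ 0`, `(1 + t)^(p - 1) ≤ (1 + p t)/(1 + t) ≤ 1 - 2 (1 - p) t`.
-/

open Set

namespace Real

variable {p t : ℝ}

theorem one_sub_mul_le_rpow_sub_one (hp0 : 0 ≤ p) (hp1 : p ≤ 1) (ht : -1 < t) :
    1 - (1 - p) * t ≤ (1 + t) ^ (p - 1) := by
  have hq : 0 < 1 + (1 - p) * t := by rcases le_total t 0 with h | h <;> nlinarith
  calc 1 - (1 - p) * t ≤ (1 + (1 - p) * t)⁻¹ := by
        rw [← one_div, le_div_iff₀ hq]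
        nlinarith [sq_nonneg ((1 - p) * t)]
    _ ≤ ((1 + t) ^ (1 - p))⁻¹ := by
        gcongr
        · exact rpow_pos_of_pos (by linarith) _
        · exact rpow_one_add_le_one_add_mul_self ht.le (by linarith) (by linarith)
    _ = (1 + t) ^ (p - 1) := by rw [← rpow_neg (by linarith), neg_sub]

theorem rpow_sub_one_le_one_sub_two_mul (hp0 : 0 ≤ p) (hp1 : p ≤ 1) (ht1 : -(1 / 2) ≤ t)
    (ht0 : t ≤ 0) : (1 + t) ^ (p - 1) ≤ 1 - 2 * (1 - p) * t := by
  have h1t : 0 < 1 + t := by linarith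
  rw [rpow_sub h1t, rpow_one, div_le_iff₀ h1t]
  calc (1 + t) ^ p ≤ 1 + p * t := rpow_one_add_le_one_add_mul_self (by linarith) hp0 hp1
    _ ≤ (1 - 2 * (1 - p) * t) * (1 + t) := by
        nlinarith [mul_nonneg (mul_nonneg (sub_nonneg.2 hp1) (neg_nonneg.2 ht0))
          (by linarith : (0 : ℝ) ≤ 1 + 2 * t)]

noncomputable def rpowTaylorGap (p s : ℝ) : ℝ := (1 + s) ^ p - (1 + p * s - p * (1 - p) * s ^ 2)

theorem rpowTaylorGap_zero (p : ℝ) : rpowTaylorGap p 0 = 0 := by simp [rpowTaylorGap]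

theorem hasDerivAt_rpowTaylorGap (p : ℝ) (ht : -1 < t) :
    HasDerivAt (rpowTaylorGap p) (p * ((1 + t) ^ (p - 1) - (1 - 2 * (1 - p) * t))) t := by
  have hpow : HasDerivAt (fun s : ℝ => (1 + s) ^ p) (1 * p * (1 + t) ^ (p - 1)) t :=
    ((hasDerivAt_id' t).const_add 1).rpow_const (Or.inl (by linarith))
  have hpoly : HasDerivAt (fun s : ℝ => 1 + p * s - p * (1 - p) * s ^ 2)
      (p * 1 - p * (1 - p) * (↑2 * t ^ (2 - 1))) t :=
    (((hasDerivAt_id' t).const_mul p).const_add 1).sub ((hasDerivAt_pow 2 t).const_mul _)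
  exact (hpow.sub hpoly).congr_deriv (by ring)

theorem continuousOn_rpowTaylorGap (p : ℝ) {D : Set ℝ} (hD : D ⊆ Ioi (-1)) :
    ContinuousOn (rpowTaylorGap p) D := fun _ hs =>
  (hasDerivAt_rpowTaylorGap p (hD hs)).continuousAt.continuousWithinAt

theorem monotoneOn_rpowTaylorGap (hp0 : 0 ≤ p) (hp1 : p ≤ 1) :
    MonotoneOn (rpowTaylorGap p) (Ici 0) := by
  refine monotoneOn_of_hasDerivWithinAt_nonneg
    (f' := fun s => p * ((1 + s) ^ (p - 1) - (1 - 2 * (1 - p) * s))) (convex_Ici 0)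
    (continuousOn_rpowTaylorGap p fun s (hs : 0 ≤ s) => mem_Ioi.2 (by linarith))
    (fun s hs => ?_) (fun s hs => ?_) <;> rw [interior_Ici, mem_Ioi] at hs
  · exact (hasDerivAt_rpowTaylorGap p (by linarith)).hasDerivWithinAt
  · refine mul_nonneg hp0 ?_
    linarith [one_sub_mul_le_rpow_sub_one hp0 hp1 (by linarith : -1 < s),
      mul_nonneg (sub_nonneg.2 hp1) hs.le]

theorem antitoneOn_rpowTaylorGap (hp0 : 0 ≤ p) (hp1 : p ≤ 1) :
    AntitoneOn (rpowTaylorGap p) (Icc (-(1 / 2)) 0) := by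
  refine antitoneOn_of_hasDerivWithinAt_nonpos
    (f' := fun s => p * ((1 + s) ^ (p - 1) - (1 - 2 * (1 - p) * s))) (convex_Icc _ _)
    (continuousOn_rpowTaylorGap p fun s hs => mem_Ioi.2 (by linarith [hs.1]))
    (fun s hs => ?_) (fun s hs => ?_) <;> rw [interior_Icc, mem_Ioo] at hs
  · exact (hasDerivAt_rpowTaylorGap p (by linarith [hs.1])).hasDerivWithinAt
  · exact mul_nonpos_of_nonneg_of_nonpos hp0
      (sub_nonpos.2 (rpow_sub_one_le_one_sub_two_mul hp0 hp1 hs.1.le hs.2.le))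

theorem one_add_mul_sub_mul_sq_le_rpow (hp0 : 0 ≤ p) (hp1 : p ≤ 1) (ht : -(1 / 2) ≤ t) :
    1 + p * t - p * (1 - p) * t ^ 2 ≤ (1 + t) ^ p := by
  suffices rpowTaylorGap p 0 ≤ rpowTaylorGap p t by
    rwa [rpowTaylorGap_zero, rpowTaylorGap, sub_nonneg] at this
  rcases le_total 0 t with ht0 | ht0
  · exact monotoneOn_rpowTaylorGap hp0 hp1 self_mem_Ici ht0 ht0
  · exact antitoneOn_rpowTaylorGap hp0 hp1 ⟨ht, ht0⟩ ⟨by norm_num, le_rfl⟩ ht0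

end Real

theorem rpow_taylor_lower_bound_general (α t : ℝ) (hα : 1 < α)
    (ht1 : -(1/2) ≤ t) :
    1 + ((α - 1) / α) * t - ((α - 1) / α ^ 2) * t ^ 2 ≤ (1 + t) ^ ((α - 1) / α) := by
  have hα0 : 0 < α := by linarith
  have hcoef : (α - 1) / α ^ 2 = (α - 1) / α * (1 - (α - 1) / α) := by field_simp; ring
  rw [hcoef]
  exact Real.one_add_mul_sub_mul_sq_le_rpow (div_nonneg (by linarith) hα0.le)
    (div_le_one_of_le₀ (by linarith) hα0.le) ht1

/-- Taylor-type lower bound: for `α > 1` and `t ∈ [−1/2, 1]`,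
`(1+t)^((α−1)/α) ≥ 1 + ((α−1)/α) t − ((α−1)/α²) t²`. -/
theorem rpow_taylor_lower_bound (α t : ℝ) (hα : 1 < α)
    (ht1 : -(1/2) ≤ t) (ht2 : t ≤ 1) :
    1 + ((α - 1) / α) * t - ((α - 1) / α ^ 2) * t ^ 2 ≤ (1 + t) ^ ((α - 1) / α) :=
  rpow_taylor_lower_bound_general α t hα ht1
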